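/- The Gibbons-Hermsen Hamiltonians Ĥ_{k,α}(X,Y,v,w) = tr(X^k v α w) close under the canonical Poisson bracket on V: for all integers k, ℓ ≥ 0 and all α, β ∈ Mat_2(ℝ), one has {Ĥ_{k,α}, Ĥ_{ℓ,β}} = Ĥ_{k+ℓ,[α,β]}, where [α,β] = αβ − βα. -/

import Mathlib

attribute [local instance] Matrix.normedAddCommGroup Matrix.normedSpace

/-- The space `V = Mat_n(ℝ) × Mat_n(ℝ) × Mat_{n×2}(ℝ) × Mat_{2×n}(ℝ)`. -/
abbrev VV (n : ℕ) := Matrix (Fin n) (Fin n) ℝ × Matrix (Fin n) (Fin n) ℝ ×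
  Matrix (Fin n) (Fin 2) ℝ × Matrix (Fin 2) (Fin n) ℝ

/-- The gradient matrix `∇_X f`. -/
noncomputable def gradX {n : ℕ} (f : VV n → ℝ) (p : VV n) : Matrix (Fin n) (Fin n) ℝ :=
  fun i j => fderiv ℝ f p (Matrix.single j i 1, 0, 0, 0)

/-- The gradient matrix `∇_Y f`. -/
noncomputable def gradY {n : ℕ} (f : VV n → ℝ) (p : VV n) : Matrix (Fin n) (Fin n) ℝ :=
  fun i j => fderiv ℝ f p (0, Matrix.single j i 1, 0, 0)

/-- The gradient matrix `∇_v f ∈ Mat_{2×n}(ℝ)`. -/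
noncomputable def gradv {n : ℕ} (f : VV n → ℝ) (p : VV n) : Matrix (Fin 2) (Fin n) ℝ :=
  fun i j => fderiv ℝ f p (0, 0, Matrix.single j i 1, 0)

/-- The gradient matrix `∇_w f ∈ Mat_{n×2}(ℝ)`. -/
noncomputable def gradw {n : ℕ} (f : VV n → ℝ) (p : VV n) : Matrix (Fin n) (Fin 2) ℝ :=
  fun i j => fderiv ℝ f p (0, 0, 0, Matrix.single j i 1)

/-- The canonical Poisson bracket on `V`:
`{f,g} = tr(∇_Y f ∇_X g − ∇_Y g ∇_X f) + tr(∇_w f ∇_v g − ∇_w g ∇_v f)`. -/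
noncomputable def cbracket {n : ℕ} (f g : VV n → ℝ) (p : VV n) : ℝ :=
  (gradY f p * gradX g p - gradY g p * gradX f p).trace +
  (gradw f p * gradv g p - gradw g p * gradv f p).trace

/-- The Gibbons-Hermsen Hamiltonian `Ĥ_{k,α}(X,Y,v,w) = tr(X^k v α w)`. -/
noncomputable def Hhat {n : ℕ} (k : ℕ) (α : Matrix (Fin 2) (Fin 2) ℝ) (p : VV n) : ℝ :=
  (p.1 ^ k * p.2.2.1 * α * p.2.2.2).trace

/-! ### Auxiliary material -/

/-- Matrix multiplication as a continuous bilinear map. -/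
noncomputable def mulCLM (m p q : Type*) [Fintype m] [Fintype p] [Fintype q] :
    Matrix m p ℝ →L[ℝ] Matrix p q ℝ →L[ℝ] Matrix m q ℝ :=
  LinearMap.toContinuousLinearMap
    { toFun := fun A => LinearMap.toContinuousLinearMap
        { toFun := fun B => A * B
          map_add' := fun B C => Matrix.mul_add A B C
          map_smul' := fun c B => Matrix.mul_smul A c B }
      map_add' := fun A B => ContinuousLinearMap.ext fun C => Matrix.add_mul A B C
      map_smul' := fun c A => ContinuousLinearMap.ext fun B => Matrix.smul_mul c A B }

@[simp] lemma mulCLM_apply {m p q : Type*} [Fintype m] [Fintype p] [Fintype q]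
    (A : Matrix m p ℝ) (B : Matrix p q ℝ) : mulCLM m p q A B = A * B := rfl

/-- Derivative of the matrix power map. -/
noncomputable def Dpow (n k : ℕ) (X : Matrix (Fin n) (Fin n) ℝ) :
    Matrix (Fin n) (Fin n) ℝ →L[ℝ] Matrix (Fin n) (Fin n) ℝ :=
  ∑ i ∈ Finset.range k,
    (mulCLM (Fin n) (Fin n) (Fin n) (X ^ i)).comp
      ((mulCLM (Fin n) (Fin n) (Fin n)).flip (X ^ (k - 1 - i)))

@[simp] lemma Dpow_apply (n k : ℕ) (X U : Matrix (Fin n) (Fin n) ℝ) :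
    Dpow n k X U = ∑ i ∈ Finset.range k, X ^ i * U * X ^ (k - 1 - i) := by
  simp [Dpow, ContinuousLinearMap.sum_apply, mul_assoc]
  exact Finset.sum_congr rfl fun i _ => rfl

lemma hasFDerivAt_matrix_pow (n k : ℕ) (X : Matrix (Fin n) (Fin n) ℝ) :
    HasFDerivAt (fun Y : Matrix (Fin n) (Fin n) ℝ => Y ^ k) (Dpow n k X) X := by
  induction k with
  | zero =>
      simpa [Dpow] using hasFDerivAt_const (1 : Matrix (Fin n) (Fin n) ℝ) X
  | succ k ih =>
      have h := (mulCLM (Fin n) (Fin n) (Fin n)).hasFDerivAt_of_bilinear ih (hasFDerivAt_id X)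
      have heq : (fun Y : Matrix (Fin n) (Fin n) ℝ => mulCLM (Fin n) (Fin n) (Fin n) (Y ^ k) (id Y))
          = fun Y => Y ^ (k + 1) := by
        funext Y; simp [pow_succ]
      erw [heq] at h
      refine h.congr_fderiv (Eq.symm ?_)
      refine ContinuousLinearMap.ext fun U => ?_
      change Dpow n (k + 1) X U = X ^ k * U + Dpow n k X U * X
      rw [Dpow_apply, Dpow_apply]
      simp only [Dpow, ContinuousLinearMap.precompL_apply, ContinuousLinearMap.precompR,
        ContinuousLinearMap.add_apply, ContinuousLinearMap.coe_sum', Finset.sum_apply,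
        ContinuousLinearMap.coe_comp', Function.comp_apply, ContinuousLinearMap.flip_apply,
        mulCLM_apply, ContinuousLinearMap.compL_apply, ContinuousLinearMap.coe_id', id_eq,
        Finset.sum_mul]
      rw [Finset.sum_range_succ]
      simp only [Nat.sub_self, pow_zero, mul_one, Nat.add_sub_cancel]
      rw [add_comm]
      congr 1
      refine Finset.sum_congr rfl fun i hi => ?_
      have hi' : i < k := Finset.mem_range.mp hi
      have h2 : k - i = (k - 1 - i) + 1 := by omega
      rw [h2, pow_succ]
      noncomm_ring

/-- The trace map as a continuous linear map. -/
noncomputable def traceCLM (n : ℕ) : Matrix (Fin n) (Fin n) ℝ →L[ℝ] ℝ :=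
  LinearMap.toContinuousLinearMap (Matrix.traceLinearMap (Fin n) ℝ ℝ)

@[simp] lemma traceCLM_apply (n : ℕ) (A : Matrix (Fin n) (Fin n) ℝ) :
    traceCLM n A = A.trace := rfl

/-- The full derivative of `Hhat k α`, applied to a tangent vector. -/
lemma fderiv_Hhat_apply (n k : ℕ) (α : Matrix (Fin 2) (Fin 2) ℝ) (p u : VV n) :
    fderiv ℝ (Hhat k α) p u =
      (Dpow n k p.1 u.1 * p.2.2.1 * α * p.2.2.2).trace +
      (p.1 ^ k * u.2.2.1 * α * p.2.2.2).trace +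
      (p.1 ^ k * p.2.2.1 * α * u.2.2.2).trace := by
  have h1 : HasFDerivAt (fun q : VV n => q.1 ^ k)
      ((Dpow n k p.1).comp (ContinuousLinearMap.fst ℝ _ _)) p :=
    (hasFDerivAt_matrix_pow n k p.1).comp p hasFDerivAt_fst
  have hv := ContinuousLinearMap.hasFDerivAt (x := p)
      (((ContinuousLinearMap.fst ℝ _ _).comp ((ContinuousLinearMap.snd ℝ _ _).comp
        (ContinuousLinearMap.snd ℝ (Matrix (Fin n) (Fin n) ℝ) _))) :
        VV n →L[ℝ] Matrix (Fin n) (Fin 2) ℝ)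
  have hw := ContinuousLinearMap.hasFDerivAt (x := p)
      (((ContinuousLinearMap.snd ℝ _ _).comp ((ContinuousLinearMap.snd ℝ _ _).comp
        (ContinuousLinearMap.snd ℝ (Matrix (Fin n) (Fin n) ℝ) _))) :
        VV n →L[ℝ] Matrix (Fin 2) (Fin n) ℝ)
  have h2 := (mulCLM (Fin n) (Fin n) (Fin 2)).hasFDerivAt_of_bilinear h1 hv
  have h3 := (mulCLM (Fin n) (Fin 2) (Fin 2)).hasFDerivAt_of_bilinear h2
    (hasFDerivAt_const α p)
  have h4 := (mulCLM (Fin n) (Fin 2) (Fin n)).hasFDerivAt_of_bilinear h3 hw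
  have h5 := (traceCLM n).hasFDerivAt.comp p h4
  have h6 : HasFDerivAt (Hhat k α) _ p := h5
  rw [h6.fderiv]
  change (p.1 ^ k * p.2.2.1 * α * u.2.2.2 + ((p.1 ^ k * p.2.2.1) * (0 : Matrix (Fin 2) (Fin 2) ℝ) +
    (p.1 ^ k * u.2.2.1 + Dpow n k p.1 u.1 * p.2.2.1) * α) * p.2.2.2).trace = _
  simp only [ContinuousLinearMap.coe_comp', Function.comp_apply, traceCLM_apply,
    ContinuousLinearMap.add_apply, ContinuousLinearMap.precompL_apply,
    ContinuousLinearMap.precompR, ContinuousLinearMap.compL_apply, mulCLM_apply,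
    ContinuousLinearMap.coe_fst', ContinuousLinearMap.coe_snd',
    ContinuousLinearMap.coe_id', id_eq, ContinuousLinearMap.zero_apply,
    Matrix.mul_zero, Matrix.zero_mul, Matrix.trace_add, Matrix.trace_zero, add_zero, zero_add,
    Matrix.add_mul, Matrix.mul_add]
  ring_nf

lemma trace_mul_std {a b : Type*} [Fintype a] [Fintype b] [DecidableEq a] [DecidableEq b]
    (C : Matrix a b ℝ) (j : b) (i : a) :
    (C * Matrix.single j i (1:ℝ)).trace = C i j := by
  simp [Matrix.trace, Matrix.diag, Matrix.mul_apply, Matrix.single,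
    Matrix.of_apply, Finset.sum_ite_eq, ite_and]

lemma gradY_Hhat (n k : ℕ) (α : Matrix (Fin 2) (Fin 2) ℝ) (p : VV n) :
    gradY (Hhat k α) p = 0 := by
  funext i j
  simp [gradY, fderiv_Hhat_apply]

lemma gradw_Hhat (n k : ℕ) (α : Matrix (Fin 2) (Fin 2) ℝ) (p : VV n) :
    gradw (Hhat k α) p = p.1 ^ k * p.2.2.1 * α := by
  funext i j
  simp only [gradw, fderiv_Hhat_apply]
  simp [trace_mul_std]

lemma gradv_Hhat (n k : ℕ) (α : Matrix (Fin 2) (Fin 2) ℝ) (p : VV n) :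
    gradv (Hhat k α) p = α * p.2.2.2 * p.1 ^ k := by
  funext i j
  rw [gradv]
  simp only [fderiv_Hhat_apply, map_zero, Matrix.zero_mul, Matrix.mul_zero,
    Matrix.trace_zero, add_zero, zero_add]
  rw [Matrix.mul_assoc (p.1 ^ k * Matrix.single j i (1:ℝ)) α p.2.2.2,
    Matrix.trace_mul_comm, ← Matrix.mul_assoc, trace_mul_std]

lemma trace_key (n k l : ℕ) (X : Matrix (Fin n) (Fin n) ℝ) (v : Matrix (Fin n) (Fin 2) ℝ)
    (w : Matrix (Fin 2) (Fin n) ℝ) (α β : Matrix (Fin 2) (Fin 2) ℝ) :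
    ((X ^ k * v * α) * (β * w * X ^ l)).trace = (X ^ (k + l) * v * (α * β) * w).trace := by
  rw [show (X ^ k * v * α) * (β * w * X ^ l) = ((X ^ k * v * α) * (β * w)) * X ^ l by
      simp only [Matrix.mul_assoc],
    Matrix.trace_mul_comm]
  congr 1
  rw [add_comm k l, pow_add]
  simp only [Matrix.mul_assoc]

/-- The Gibbons-Hermsen Hamiltonians close under the canonical Poisson bracket:
`{Ĥ_{k,α}, Ĥ_{ℓ,β}} = Ĥ_{k+ℓ,[α,β]}`. -/
theorem Hhat_bracket (n : ℕ) (hn : 1 ≤ n) (k l : ℕ) (α β : Matrix (Fin 2) (Fin 2) ℝ) :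
    ∀ p : VV n, cbracket (Hhat k α) (Hhat l β) p = Hhat (k + l) (α * β - β * α) p := by
  intro p
  rw [cbracket, gradY_Hhat, gradY_Hhat, gradw_Hhat, gradw_Hhat, gradv_Hhat, gradv_Hhat]
  simp only [Matrix.zero_mul, sub_zero, Matrix.trace_zero, zero_add, zero_sub, neg_zero,
    sub_self]
  rw [Matrix.trace_sub, trace_key, trace_key, add_comm l k]
  rw [Hhat]
  simp only [Matrix.mul_sub, Matrix.sub_mul, Matrix.trace_sub]
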